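/- Given a set 𝕎 of welfare functions on a finite player set N with budget-balanced distribution rules f^𝕎 that guarantee the existence of a pure Nash equilibrium in all games in G(N, f^𝕎, 𝕎), where each f^W = Σ_{T∈𝒯^W} q^W_T f^T_{GWSV}[ω^{W,T}] for two-block weight systems ω^{W,T} = (λ^{W,T}, (S_1^{W,T}, S_2^{W,T})), the transitive closure ⪰_Ω^+ of the relation ⪰_Ω constitutes a partial order on N modulo the equivalence =_Ω^+; concretely, any cycle i_1 ⪰_Ω i_2 ⪰_Ω ⋯ ⪰_Ω i_k ⪰_Ω i_1 of distinct players implies i_1 =_Ω i_2 =_Ω ⋯ =_Ω i_k =_Ω i_1. -/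

import Mathlib

open scoped BigOperators Classical

namespace CostSharing

/-- A welfare sharing game on player set `N`: a finite resource set, a nonempty
finite action set (a collection of subsets of resources) for each player, and a
local welfare function at each resource. -/
structure Game (N : Type) [Fintype N] [DecidableEq N] where
  R : Type
  [finR : Fintype R]
  [decR : DecidableEq R]
  act : N → Finset (Finset R)
  act_nonempty : ∀ i, (act i).Nonempty
  Wr : R → Finset N → ℝ

attribute [instance] Game.finR Game.decR

variable {N : Type} [Fintype N] [DecidableEq N]

/-- `{a}_r`: the set of players choosing resource `r` in profile `a`. -/
def playersAt {G : Game N} (a : N → Finset G.R) (r : G.R) : Finset N :=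
  Finset.univ.filter fun i => r ∈ a i

/-- Player `i`'s utility, where `fD` assigns to each local welfare function its
local distribution rule (so resources with identical welfare functions have
identical distribution rules). -/
noncomputable def utility (G : Game N) (fD : (Finset N → ℝ) → N → Finset N → ℝ)
    (a : N → Finset G.R) (i : N) : ℝ :=
  ∑ r ∈ a i, fD (G.Wr r) i (playersAt a r)

/-- Pure Nash equilibrium. -/
def IsPNE (G : Game N) (fD : (Finset N → ℝ) → N → Finset N → ℝ)
    (a : N → Finset G.R) : Prop :=
  (∀ i, a i ∈ G.act i) ∧
    ∀ i : N, ∀ b ∈ G.act i,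
      utility G fD (Function.update a i b) i ≤ utility G fD a i

/-- Every game in the class `G(N, f^𝕎, 𝕎)` possesses a pure Nash equilibrium. -/
def GuaranteesPNE (𝕎 : Set (Finset N → ℝ))
    (fD : (Finset N → ℝ) → N → Finset N → ℝ) : Prop :=
  ∀ G : Game N, (∀ r : G.R, G.Wr r ∈ 𝕎) → ∃ a, IsPNE G fD a

/-- Every game in the single-welfare-function class `G(N, f, W)` possesses a
pure Nash equilibrium. -/
def GuaranteesPNE1 (W : Finset N → ℝ) (f : N → Finset N → ℝ) : Prop :=
  ∀ G : Game N, (∀ r : G.R, G.Wr r = W) → ∃ a, IsPNE G (fun _ => f) a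

/-- A distribution rule allocates nothing to absent players. -/
def DistRule (f : N → Finset N → ℝ) : Prop :=
  ∀ (i : N) (S : Finset N), i ∉ S → f i S = 0

/-- Budget balance: `∑_{i∈S} f(i,S) = W(S)`. -/
def BudgetBalanced (W : Finset N → ℝ) (f : N → Finset N → ℝ) : Prop :=
  ∀ S : Finset N, ∑ i ∈ S, f i S = W S

/-- The inclusion (unanimity) welfare function `W^T`. -/
def unanimity (T S : Finset N) : ℝ := if T ⊆ S then 1 else 0

/-- The basis coefficient `q^W_T` of `W` on the unanimity basis (Möbius inversion). -/
def coeff (W : Finset N → ℝ) (T : Finset N) : ℝ :=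
  ∑ R ∈ T.powerset, (-1 : ℝ) ^ (T.card - R.card) * W R

/-- The support `𝒯^W` of the basis representation of `W`. -/
noncomputable def supp (W : Finset N → ℝ) : Finset (Finset N) :=
  Finset.univ.filter fun T => coeff W T ≠ 0

/-- `𝒯^W(S)`: the contributing coalitions within `S`. -/
noncomputable def suppIn (W : Finset N → ℝ) (S : Finset N) : Finset (Finset N) :=
  (supp W).filter (· ⊆ S)

/-- `N^W(S)`: the contributing players within `S`. -/
noncomputable def contributors (W : Finset N → ℝ) (S : Finset N) : Finset N :=
  (suppIn W S).biUnion id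

/-- A weight system `ω = (λ, Σ)`: strictly positive player weights together with
an ordered partition of `N`. -/
structure WeightSystem (N : Type) [Fintype N] [DecidableEq N] where
  lam : N → ℝ
  lam_pos : ∀ i, 0 < lam i
  m : ℕ
  part : Fin m → Finset N
  part_nonempty : ∀ k, (part k).Nonempty
  part_disjoint : ∀ k l, k ≠ l → Disjoint (part k) (part l)
  part_covers : ∀ i : N, ∃ k, i ∈ part k

/-- The index of the block of the ordered partition containing player `i`. -/
noncomputable def WeightSystem.idx (ω : WeightSystem N) (i : N) : Fin ω.m :=
  (ω.part_covers i).choose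

/-- `T̄ = T ∩ S_k` where `k = min {j : S_j ∩ T ≠ ∅}`. -/
noncomputable def WeightSystem.bar (ω : WeightSystem N) (T : Finset N) : Finset N :=
  T.filter fun i => ∀ j ∈ T, ω.idx i ≤ ω.idx j

/-- The generalized weighted Shapley value basis rule `f^T_{GWSV}[ω]`. -/
noncomputable def fGWSVbasis (ω : WeightSystem N) (T : Finset N) (i : N)
    (S : Finset N) : ℝ :=
  if i ∈ ω.bar T ∧ T ⊆ S then ω.lam i / ∑ j ∈ ω.bar T, ω.lam j else 0

/-- The generalized weighted marginal contribution basis rule `f^T_{GWMC}[ω]`. -/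
noncomputable def fGWMCbasis (ω : WeightSystem N) (T : Finset N) (i : N)
    (S : Finset N) : ℝ :=
  if i ∈ ω.bar T ∧ T ⊆ S then ω.lam i else 0

/-- The generalized weighted Shapley value distribution rule `f^{W'}_{GWSV}[ω]`. -/
noncomputable def fGWSV (ω : WeightSystem N) (W' : Finset N → ℝ) (i : N)
    (S : Finset N) : ℝ :=
  ∑ T ∈ supp W', coeff W' T * fGWSVbasis ω T i S

/-- The generalized weighted marginal contribution distribution rule
`f^{W''}_{GWMC}[ω]`. -/
noncomputable def fGWMC (ω : WeightSystem N) (W'' : Finset N → ℝ) (i : N)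
    (S : Finset N) : ℝ :=
  ∑ T ∈ supp W'', coeff W'' T * fGWMCbasis ω T i S

/-- The recursively defined basis distribution rules `f^T` of a distribution
rule `f` for `W` (recursion along the min-partition of `(𝒯^W, ⊆)`). -/
noncomputable def basisRule (W : Finset N → ℝ) (f : N → Finset N → ℝ)
    (T : Finset N) (i : N) (S : Finset N) : ℝ :=
  if T ⊆ S then
    (1 / coeff W T) *
      (f i T - ∑ T' ∈ ((suppIn W T).erase T).attach,
        coeff W T'.1 * basisRule W f T'.1 i S)
  else 0
termination_by T.card
decreasing_by
  have h := T'.2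
  simp only [Finset.mem_erase, suppIn, Finset.mem_filter] at h
  exact Finset.card_lt_card (Finset.ssubset_iff_subset_ne.mpr ⟨h.2.2, h.1⟩)


/-- The GWSV basis rule `f^{W,T}` for a two-block weight system
`ω^{W,T} = (λ^{W,T}, (S₁, T∖S₁))` on `T`. -/
noncomputable def fTwoBlock (lam : N → ℝ) (S₁ T : Finset N) (i : N)
    (S : Finset N) : ℝ :=
  if i ∈ S₁ ∧ T ⊆ S then lam i / ∑ j ∈ S₁, lam j else 0

/-- Membership in `𝒯^{W+}_{xy}` for a two-block weight system on `T`. -/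
def memTplus (lam : N → ℝ) (S₁ T : Finset N) (x y : N) : Prop :=
  x ∈ T ∧ y ∈ T ∧ (0 < fTwoBlock lam S₁ T x T ∨ 0 < fTwoBlock lam S₁ T y T)

/-- The relation `i ⪰_Ω j`. -/
def succOmega (𝕎 : Set (Finset N → ℝ))
    (lam : (Finset N → ℝ) → Finset N → N → ℝ)
    (S₁ : (Finset N → ℝ) → Finset N → Finset N) (i j : N) : Prop :=
  i = j ∨ ∃ W ∈ 𝕎, ∃ T ∈ supp W,
    memTplus (lam W T) (S₁ W T) T i j ∧ i ∈ S₁ W T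

/-!
Suppose the arc `p l ⪰_Ω p (l + 1)` of the cycle is not reversed. The relation `i ⪰_Ω y` holds
exactly when, for some `W ∈ 𝕎` and some coalition `C`, the share of `i` under `f^W` at `C` changes
when `y` is removed from `C`. So on every arc `p j ⪰_Ω p (j + 1)` such a marginal effect is
nonzero, while every effect of `p l` on the share of `p (l + 1)` vanishes.

These effects are assembled into a game without pure Nash equilibrium: `p j` picks a side in a
block of copies of a resource with welfare function `W j`, shared with `p (j + 1)`, and with the
same choice a side in block `j - 1`. Weighting the blocks geometrically along the cycle, starting
at `l + 1`, makes `p j` care only about whether `p (j + 1)` is on its side in block `j`, and the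
sides are wired so that these wishes are inconsistent around the cycle, by parity in `ZMod 2`.
-/

lemma exists_sum_ite_subset_eq {α M : Type*} [AddCommMonoid M] (s : Finset (Finset α))
    (g : Finset α → M) (h : ∃ T ∈ s, g T ≠ 0) :
    ∃ C, g C ≠ 0 ∧ ∑ T ∈ s, (if T ⊆ C then g T else 0) = g C := by
  obtain ⟨C, ⟨hCs, hC⟩, hmin⟩ := exists_minimal_of_wellFoundedLT _ h
  refine ⟨C, hC, ?_⟩
  rw [Finset.sum_eq_single_of_mem C hCs fun T hT hTC => ?_, if_pos subset_rfl]
  split_ifs with hsub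
  · by_contra hT0
    exact hTC (le_antisymm hsub (hmin ⟨hT, hT0⟩ hsub))
  · rfl

section TwoBlock

omit [Fintype N]

variable {lam : N → ℝ} {S₁ T : Finset N} {i : N}

lemma fTwoBlock_eq_zero_of_notMem (hi : i ∉ S₁) (S : Finset N) : fTwoBlock lam S₁ T i S = 0 :=
  if_neg fun h => hi h.1

lemma fTwoBlock_self_pos (hlam : ∀ j, 0 < lam j) (hi : i ∈ S₁) : 0 < fTwoBlock lam S₁ T i T := by
  rw [fTwoBlock, if_pos ⟨hi, subset_rfl⟩]
  exact div_pos (hlam i) (Finset.sum_pos (fun j _ => hlam j) ⟨i, hi⟩)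

lemma fTwoBlock_sub_erase (y : N) (C : Finset N) :
    fTwoBlock lam S₁ T i C - fTwoBlock lam S₁ T i (C.erase y) =
      if T ⊆ C ∧ y ∈ T then fTwoBlock lam S₁ T i T else 0 := by
  simp only [fTwoBlock, Finset.subset_erase, subset_refl, and_true]
  split_ifs <;> simp_all

end TwoBlock

def marginalShare (f : N → Finset N → ℝ) (i y : N) (C : Finset N) : ℝ :=
  f i C - f i (C.erase y)

lemma marginalShare_eq_sum {W : Finset N → ℝ} {f : N → Finset N → ℝ}
    {lam : Finset N → N → ℝ} {S₁ : Finset N → Finset N}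
    (hf : ∀ i S, f i S = ∑ T ∈ supp W, coeff W T * fTwoBlock (lam T) (S₁ T) T i S)
    (i y : N) (C : Finset N) :
    marginalShare f i y C = ∑ T ∈ supp W,
      if T ⊆ C ∧ y ∈ T then coeff W T * fTwoBlock (lam T) (S₁ T) T i T else 0 := by
  rw [marginalShare, hf, hf, ← Finset.sum_sub_distrib]
  refine Finset.sum_congr rfl fun T _ => ?_
  rw [← mul_sub, fTwoBlock_sub_erase, mul_ite, mul_zero]

section Marginals

variable {𝕎 : Set (Finset N → ℝ)} {fD : (Finset N → ℝ) → N → Finset N → ℝ}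
  {lam : (Finset N → ℝ) → Finset N → N → ℝ} {S₁ : (Finset N → ℝ) → Finset N → Finset N}

lemma marginalShare_eq_zero_of_not_succOmega {W : Finset N → ℝ} (hW : W ∈ 𝕎)
    (hlam : ∀ T ∈ supp W, ∀ i, 0 < lam W T i) (hS₁ : ∀ T ∈ supp W, S₁ W T ⊆ T)
    (hform : ∀ i S, fD W i S = ∑ T ∈ supp W, coeff W T * fTwoBlock (lam W T) (S₁ W T) T i S)
    {i y : N} (h : ¬ succOmega 𝕎 lam S₁ i y) (C : Finset N) :
    marginalShare (fD W) i y C = 0 := by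
  rw [marginalShare_eq_sum hform]
  refine Finset.sum_eq_zero fun T hT => ?_
  split_ifs with hTC
  · by_cases hi : i ∈ S₁ W T
    · exact absurd (Or.inr ⟨W, hW, T, hT, ⟨hS₁ T hT hi, hTC.2,
        Or.inl (fTwoBlock_self_pos (hlam T hT) hi)⟩, hi⟩) h
    · rw [fTwoBlock_eq_zero_of_notMem hi, mul_zero]
  · rfl

lemma exists_marginalShare_ne_zero_of_succOmega
    (hlam : ∀ W ∈ 𝕎, ∀ T ∈ supp W, ∀ i, 0 < lam W T i)
    (hform : ∀ W ∈ 𝕎, ∀ i S,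
      fD W i S = ∑ T ∈ supp W, coeff W T * fTwoBlock (lam W T) (S₁ W T) T i S)
    {i y : N} (hne : i ≠ y) (h : succOmega 𝕎 lam S₁ i y) :
    ∃ W ∈ 𝕎, ∃ C, marginalShare (fD W) i y C ≠ 0 := by
  obtain ⟨W, hW, T, hT, ⟨-, hyT, -⟩, hiT⟩ := h.resolve_left hne
  let g : Finset N → ℝ := fun T =>
    if y ∈ T then coeff W T * fTwoBlock (lam W T) (S₁ W T) T i T else 0
  have hgT : g T ≠ 0 := by
    simp only [g, if_pos hyT]
    exact mul_ne_zero (Finset.mem_filter.mp hT).2 (fTwoBlock_self_pos (hlam W hW T hT) hiT).ne'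
  obtain ⟨C, hgC, hsum⟩ := exists_sum_ite_subset_eq (supp W) g ⟨T, hT, hgT⟩
  have hmarg : marginalShare (fD W) i y C = g C := by
    rw [marginalShare_eq_sum (hform W hW), ← hsum]
    simp only [g, ite_and]
  exact ⟨W, hW, C, hmarg ▸ hgC⟩

end Marginals

lemma exists_nat_weights {k : ℕ} [NeZero k] (β δ : Fin k → ℝ) (hβ : ∀ j, β j ≠ 0) {l : Fin k}
    (hδ : δ l = 0) : ∃ m : Fin k → ℕ, ∀ j, (m (j - 1) : ℝ) * |δ j| < m j * |β j| := by
  choose n hn using fun j => exists_nat_gt (|δ j| / |β j|)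
  set B := ∑ i, n i
  have hB : ∀ j, |δ j| < B * |β j| := fun j => by
    have hnB : n j ≤ B := Finset.single_le_sum (fun i _ => Nat.zero_le (n i)) (Finset.mem_univ j)
    rw [← div_lt_iff₀ (abs_pos.mpr (hβ j))]
    exact (hn j).trans_le (by exact_mod_cast hnB)
  have hBpos : (0 : ℝ) < B := pos_of_mul_pos_left ((abs_nonneg _).trans_lt (hB l)) (abs_nonneg _)
  -- the weights `B ^ (j - l)` grow by the factor `B` along every arc except the one into `l`
  refine ⟨fun j => B ^ (j - l).val, fun j => ?_⟩
  push_cast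
  rcases eq_or_ne j l with rfl | hjl
  · rw [hδ, abs_zero, mul_zero]
    exact mul_pos (pow_pos hBpos _) (abs_pos.mpr (hβ j))
  · have hval : (j - 1 - l).val + 1 = (j - l).val := by
      rw [sub_right_comm, Fin.val_sub_one_of_ne_zero (sub_ne_zero.mpr hjl)]
      have := Fin.pos_iff_ne_zero.mpr (sub_ne_zero.mpr hjl)
      omega
    rw [← hval, pow_succ, mul_assoc]
    exact mul_lt_mul_of_pos_left (hB j) (pow_pos hBpos _)

lemma not_forall_eq_add_ite_zero {k : ℕ} [NeZero k] (x : Fin k → ZMod 2) :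
    ¬ ∀ j, x j = x (j + 1) + if j + 1 = 0 then 1 else 0 := by
  intro h
  let e : Fin k → ZMod 2 := fun g => if g = 0 then 1 else 0
  have hsum : ∑ j, x j = ∑ j, x j + ∑ j, e j := by
    calc ∑ j, x j = ∑ j, (x (j + 1) + e (j + 1)) := Finset.sum_congr rfl fun j _ => h j
      _ = ∑ j, (x j + e j) := Equiv.sum_comp (Equiv.addRight 1) fun j => x j + e j
      _ = ∑ j, x j + ∑ j, e j := Finset.sum_add_distrib
  have he : ∑ j, e j = 1 := by simp [e]
  have : (1 : ZMod 2) = 0 := by rw [← he]; exact (add_eq_left.mp hsum.symm)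
  exact absurd this (by decide)

lemma flip_gain_pos {β δ a b : ℝ} (ha : 0 ≤ a) (hdom : a * |δ| < b * |β|) {P Q : Prop}
    [Decidable P] [Decidable Q] (hP : ¬ (P ↔ 0 < β)) :
    0 < b * (if P then -β else β) + a * (if Q then -δ else δ) := by
  have hβ : b * (if P then -β else β) = b * |β| := by
    rcases lt_or_ge 0 β with hlt | hge
    · rw [if_neg fun h => hP (iff_of_true h hlt), abs_of_pos hlt]
    · rw [if_pos (by_contra fun h => hP (iff_of_false h (not_lt.mpr hge))), abs_of_nonpos hge]
  have hδ : -(a * |δ|) ≤ a * (if Q then -δ else δ) := by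
    rw [← mul_neg]
    refine mul_le_mul_of_nonneg_left ?_ ha
    split_ifs
    · exact neg_le_neg (le_abs_self δ)
    · exact neg_abs_le δ
  linarith

lemma add_one_eq_iff_ne (u v : ZMod 2) : u + 1 = v ↔ u ≠ v := by
  revert u v
  decide

section Occupants

omit [Fintype N]

lemma sum_filter_sides_eq {σ : Type*} [Fintype σ] [DecidableEq σ] (C : Finset N)
    (f : Finset N → ℝ) {q : N} (hf : ∀ S, q ∉ S → f S = 0) (r : N) (u v : σ) :
    ∑ s, f (C.filter fun i => (i = q → u = s) ∧ (i = r → v = s)) =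
      f (if u = v then C else C.erase r) := by
  rw [Fintype.sum_eq_single u fun s hs => hf _ fun h => hs ((Finset.mem_filter.mp h).2.1 rfl).symm]
  congr 1
  ext i
  split_ifs with huv <;> simp only [Finset.mem_filter, Finset.mem_erase] <;> grind

variable {k : ℕ} [NeZero k] (p : Fin k → N) (C : Fin k → Finset N) (c : Fin k → ZMod 2)
  (m : Fin k → ℕ)

-- In block `g`, player `p g` sits on side `x g` and player `p (g + 1)` on side
-- `x (g + 1) + c (g + 1)`; the other members of `C g` sit on both sides.
def occupants (x : Fin k → ZMod 2) (g : Fin k) (s : ZMod 2) : Finset N :=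
  (C g).filter fun i => (i = p g → x g = s) ∧ (i = p (g + 1) → x (g + 1) + c (g + 1) = s)

abbrev CycleResource := Σ g : Fin k, ZMod 2 × Fin (m g)

def cycleStrategy (x : Fin k → ZMod 2) (i : N) : Finset (CycleResource m) :=
  Finset.univ.filter fun r => i ∈ occupants p C c x r.1 r.2.1

variable {p C c m}

lemma mem_occupants_congr {x y : Fin k → ZMod 2} {i : N} (h : ∀ j, p j = i → x j = y j)
    (g : Fin k) (s : ZMod 2) : i ∈ occupants p C c x g s ↔ i ∈ occupants p C c y g s := by
  simp only [occupants, Finset.mem_filter]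
  exact and_congr_right fun _ => and_congr (imp_congr_right fun hi => by rw [h g hi.symm])
    (imp_congr_right fun hi => by rw [h (g + 1) hi.symm])

lemma occupants_update_of_ne (x : Fin k → ZMod 2) {j g : Fin k} (v : ZMod 2) (hg : g ≠ j)
    (hg' : g + 1 ≠ j) (s : ZMod 2) :
    occupants p C c (Function.update x j v) g s = occupants p C c x g s := by
  simp only [occupants, Function.update_of_ne hg, Function.update_of_ne hg']

lemma cycleStrategy_congr {x y : Fin k → ZMod 2} {i : N} (h : ∀ j, p j = i → x j = y j) :
    cycleStrategy p C c m x i = cycleStrategy p C c m y i :=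
  Finset.filter_congr fun r _ => mem_occupants_congr h r.1 r.2.1

lemma update_cycleStrategy (x : Fin k → ZMod 2) (j : Fin k) (v : ZMod 2) :
    Function.update (cycleStrategy p C c m x) (p j)
        (cycleStrategy p C c m (Function.update x j v) (p j)) =
      cycleStrategy p C c m (Function.update x j v) := by
  funext i
  rcases eq_or_ne i (p j) with rfl | hi
  · rw [Function.update_self]
  · rw [Function.update_of_ne hi]
    exact cycleStrategy_congr fun j' hj' =>
      (Function.update_of_ne (by rintro rfl; exact hi hj'.symm) _ _).symm

lemma sum_occupants_self (f : Finset N → ℝ) (x : Fin k → ZMod 2) (j : Fin k)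
    (hf : ∀ S, p j ∉ S → f S = 0) :
    ∑ s, f (occupants p C c x j s) =
      f (if x j = x (j + 1) + c (j + 1) then C j else (C j).erase (p (j + 1))) :=
  sum_filter_sides_eq (C j) f hf _ _ _

lemma sum_occupants_pred (f : Finset N → ℝ) (x : Fin k → ZMod 2) (j : Fin k)
    (hf : ∀ S, p j ∉ S → f S = 0) :
    ∑ s, f (occupants p C c x (j - 1) s) =
      f (if x j + c j = x (j - 1) then C (j - 1) else (C (j - 1)).erase (p (j - 1))) := by
  unfold occupants
  rw [sub_add_cancel, ← sum_filter_sides_eq (C (j - 1)) f hf]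
  exact Finset.sum_congr rfl fun s _ => congrArg f (Finset.filter_congr fun i _ => and_comm)

end Occupants

section CycleGame

variable {k : ℕ} [NeZero k] (p : Fin k → N) (C : Fin k → Finset N) (c : Fin k → ZMod 2)
  (m : Fin k → ℕ)

abbrev cycleGame (W : Fin k → Finset N → ℝ) : Game N where
  R := CycleResource m
  act i := Finset.univ.image fun x => cycleStrategy p C c m x i
  act_nonempty _ := Finset.univ_nonempty.image _
  Wr r := W r.1

variable (fD : (Finset N → ℝ) → N → Finset N → ℝ) (W : Fin k → Finset N → ℝ)

def forwardShare (j : Fin k) : ℝ := marginalShare (fD (W j)) (p j) (p (j + 1)) (C j)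

def backwardShare (j : Fin k) : ℝ := marginalShare (fD (W (j - 1))) (p j) (p (j - 1)) (C (j - 1))

variable {p C c m fD W}

lemma exists_eq_cycleStrategy {a : N → Finset (CycleResource m)}
    (ha : ∀ i, a i ∈ (cycleGame p C c m W).act i) : ∃ x, a = cycleStrategy p C c m x := by
  choose y hy using fun i => Finset.mem_image.mp (ha i)
  refine ⟨fun j => y (p j) j, funext fun i => ?_⟩
  rw [← (hy i).2]
  exact cycleStrategy_congr fun j hj => by subst hj; rfl

lemma playersAt_cycleStrategy (x : Fin k → ZMod 2) (r : CycleResource m) :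
    playersAt (G := cycleGame p C c m W) (cycleStrategy p C c m x) r =
      occupants p C c x r.1 r.2.1 := by
  ext i
  simp only [playersAt, cycleStrategy, Finset.mem_filter, Finset.mem_univ, true_and]

lemma utility_cycleStrategy (hdist : ∀ g, DistRule (fD (W g))) (x : Fin k → ZMod 2) (i : N) :
    utility (cycleGame p C c m W) fD (cycleStrategy p C c m x) i =
      ∑ g, (m g : ℝ) * ∑ s, fD (W g) i (occupants p C c x g s) := by
  change ∑ r ∈ cycleStrategy p C c m x i,
    fD (W r.1) i (playersAt (G := cycleGame p C c m W) (cycleStrategy p C c m x) r) = _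
  simp only [playersAt_cycleStrategy]
  rw [cycleStrategy, Finset.sum_filter_of_ne fun r _ h => by_contra fun hr => h (hdist _ _ _ hr),
    Fintype.sum_sigma]
  refine Finset.sum_congr rfl fun g _ => ?_
  simp [Fintype.sum_prod_type, Finset.mul_sum]

lemma utility_flip_sub (hdist : ∀ g, DistRule (fD (W g))) (h1 : (1 : Fin k) ≠ 0)
    (x : Fin k → ZMod 2) (j : Fin k) :
    utility (cycleGame p C c m W) fD (cycleStrategy p C c m (Function.update x j (x j + 1))) (p j)
        - utility (cycleGame p C c m W) fD (cycleStrategy p C c m x) (p j) =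
      m j * (if x j = x (j + 1) + c (j + 1) then -forwardShare p C fD W j
          else forwardShare p C fD W j) +
        m (j - 1) * (if x j + c j = x (j - 1) then -backwardShare p C fD W j
          else backwardShare p C fD W j) := by
  have hsucc : j + 1 ≠ j := fun h => h1 (add_eq_left.mp h)
  have hpred : j - 1 ≠ j := fun h => h1 (sub_eq_self.mp h)
  rw [utility_cycleStrategy hdist, utility_cycleStrategy hdist, ← Finset.sum_sub_distrib,
    Fintype.sum_eq_add j (j - 1) hpred.symm fun g ⟨hgj, hgj'⟩ => ?_]
  · simp only [← mul_sub, sum_occupants_self _ _ _ (hdist _ _),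
      sum_occupants_pred _ _ _ (hdist _ _), Function.update_self, Function.update_of_ne hsucc,
      Function.update_of_ne hpred, add_right_comm (x j) 1, add_one_eq_iff_ne, ite_not,
      forwardShare, backwardShare, marginalShare]
    split_ifs <;> ring
  · simp only [occupants_update_of_ne x _ hgj fun h => hgj' (eq_sub_of_add_eq h), sub_self]

lemma iff_of_isPNE_cycleStrategy (hdist : ∀ g, DistRule (fD (W g))) (h1 : (1 : Fin k) ≠ 0)
    (hdom : ∀ j, m (j - 1) * |backwardShare p C fD W j| < m j * |forwardShare p C fD W j|)
    {x : Fin k → ZMod 2} (hx : IsPNE (cycleGame p C c m W) fD (cycleStrategy p C c m x))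
    (j : Fin k) : x j = x (j + 1) + c (j + 1) ↔ 0 < forwardShare p C fD W j := by
  by_contra hP
  have hle := hx.2 (p j) _ (Finset.mem_image_of_mem (fun y => cycleStrategy p C c m y (p j))
    (Finset.mem_univ (Function.update x j (x j + 1))))
  rw [update_cycleStrategy, ← sub_nonpos, utility_flip_sub hdist h1] at hle
  exact hle.not_gt (flip_gain_pos (Nat.cast_nonneg _) (hdom j) hP)

noncomputable def cycleWiring (β : Fin k → ℝ) (g : Fin k) : ZMod 2 :=
  (if g = 0 then 1 else 0) + if 0 < β (g - 1) then 0 else 1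

lemma eq_add_of_iff_cycleWiring {β : Fin k → ℝ} {u v : ZMod 2} {j : Fin k}
    (h : u = v + cycleWiring β (j + 1) ↔ 0 < β j) : u = v + if j + 1 = 0 then 1 else 0 := by
  rw [cycleWiring, add_sub_cancel_right] at h
  generalize (if j + 1 = 0 then (1 : ZMod 2) else 0) = e at h ⊢
  by_cases hβ : 0 < β j
  · rwa [if_pos hβ, add_zero, iff_true_right hβ] at h
  · rw [if_neg hβ, iff_false_right hβ] at h
    revert u v e
    decide

lemma not_isPNE_cycleGame (hdist : ∀ g, DistRule (fD (W g))) (h1 : (1 : Fin k) ≠ 0)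
    (hdom : ∀ j, m (j - 1) * |backwardShare p C fD W j| < m j * |forwardShare p C fD W j|)
    (a : N → Finset (CycleResource m)) :
    ¬ IsPNE (cycleGame p C (cycleWiring (forwardShare p C fD W)) m W) fD a := by
  intro ha
  obtain ⟨x, rfl⟩ := exists_eq_cycleStrategy ha.1
  refine not_forall_eq_add_ite_zero x fun j => ?_
  exact eq_add_of_iff_cycleWiring (iff_of_isPNE_cycleStrategy hdist h1 hdom ha j)

end CycleGame

theorem succOmega_partial_order_general (N : Type) [Fintype N] [DecidableEq N]
    (𝕎 : Set (Finset N → ℝ)) (fD : (Finset N → ℝ) → N → Finset N → ℝ)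
    (lam : (Finset N → ℝ) → Finset N → N → ℝ)
    (S₁ : (Finset N → ℝ) → Finset N → Finset N)
    (hlam : ∀ W ∈ 𝕎, ∀ T ∈ supp W, ∀ i : N, 0 < lam W T i)
    (hS₁ : ∀ W ∈ 𝕎, ∀ T ∈ supp W, S₁ W T ⊆ T)
    (hdist : ∀ W ∈ 𝕎, DistRule (fD W))
    (hform : ∀ W ∈ 𝕎, ∀ (i : N) (S : Finset N),
      fD W i S = ∑ T ∈ supp W, coeff W T * fTwoBlock (lam W T) (S₁ W T) T i S)
    (hPNE : GuaranteesPNE 𝕎 fD)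
    (k : ℕ) [NeZero k] (p : Fin k → N) (hinj : Function.Injective p)
    (hcyc : ∀ j : Fin k, succOmega 𝕎 lam S₁ (p j) (p (j + 1))) :
    ∀ j : Fin k, succOmega 𝕎 lam S₁ (p j) (p (j + 1)) ∧
      succOmega 𝕎 lam S₁ (p (j + 1)) (p j) := by
  refine fun j => ⟨hcyc j, ?_⟩
  by_cases h1 : (1 : Fin k) = 0
  · exact Or.inl (by rw [h1, add_zero])
  by_contra hj
  have hne : ∀ i : Fin k, p i ≠ p (i + 1) := fun i h => h1 (add_eq_left.mp (hinj h).symm)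
  choose W hW C hβ using fun i =>
    exists_marginalShare_ne_zero_of_succOmega hlam hform (hne i) (hcyc i)
  have hδ : marginalShare (fD (W j)) (p (j + 1)) (p j) (C j) = 0 :=
    marginalShare_eq_zero_of_not_succOmega (hW j) (hlam _ (hW j)) (hS₁ _ (hW j))
      (hform _ (hW j)) hj (C j)
  obtain ⟨m, hm⟩ := exists_nat_weights (forwardShare p C fD W) (backwardShare p C fD W) hβ
    (l := j + 1) (by simpa only [backwardShare, add_sub_cancel_right] using hδ)
  obtain ⟨a, ha⟩ := hPNE (cycleGame p C _ m W) fun r => hW r.1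
  exact not_isPNE_cycleGame (fun g => hdist _ (hW g)) h1 hm a ha

/-- **Lemma 7 (partial order).** Under the stated hypotheses, `⪰_Ω^+` is a
partial order on `N` modulo `=_Ω^+`: any cycle
`i_1 ⪰_Ω i_2 ⪰_Ω ⋯ ⪰_Ω i_k ⪰_Ω i_1` of distinct players implies
`i_1 =_Ω i_2 =_Ω ⋯ =_Ω i_k =_Ω i_1`. -/
theorem succOmega_partial_order (N : Type) [Fintype N] [DecidableEq N]
    (hN : 1 < Fintype.card N)
    (𝕎 : Set (Finset N → ℝ)) (fD : (Finset N → ℝ) → N → Finset N → ℝ)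
    (lam : (Finset N → ℝ) → Finset N → N → ℝ)
    (S₁ : (Finset N → ℝ) → Finset N → Finset N)
    (hW0 : ∀ W ∈ 𝕎, W ∅ = 0)
    (hlam : ∀ W ∈ 𝕎, ∀ T ∈ supp W, ∀ i : N, 0 < lam W T i)
    (hS₁ : ∀ W ∈ 𝕎, ∀ T ∈ supp W, S₁ W T ⊆ T)
    (hdist : ∀ W ∈ 𝕎, DistRule (fD W))
    (hbb : ∀ W ∈ 𝕎, BudgetBalanced W (fD W))
    (hform : ∀ W ∈ 𝕎, ∀ (i : N) (S : Finset N),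
      fD W i S = ∑ T ∈ supp W, coeff W T * fTwoBlock (lam W T) (S₁ W T) T i S)
    (hPNE : GuaranteesPNE 𝕎 fD)
    (k : ℕ) [NeZero k] (p : Fin k → N) (hinj : Function.Injective p)
    (hcyc : ∀ j : Fin k, succOmega 𝕎 lam S₁ (p j) (p (j + 1))) :
    ∀ j : Fin k, succOmega 𝕎 lam S₁ (p j) (p (j + 1)) ∧
      succOmega 𝕎 lam S₁ (p (j + 1)) (p j) :=
  succOmega_partial_order_general N 𝕎 fD lam S₁ hlam hS₁ hdist hform hPNE k p hinj hcyc

end CostSharing
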